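/- arXiv:1209.5089 — 2 statements merged into one kernel-verified Lean document; each statement's English description precedes it below -/
import Mathlib

section
/- Let Γ be a d-chorded simplicial complex. Then for every W ⊆ V(Γ) and every field k of characteristic 2, the reduced simplicial homology of the induced subcomplex of the d-closure satisfies H̃_i(Δ_d(Γ)_W; k) = 0 for all i with 0 ≤ i ≤ d−2 and for i = d. -/
open Finset

namespace ChordedPaper

variable {V : Type*} [DecidableEq V] [Fintype V]

/-- A simplicial complex: a set of finsets (faces) closed under taking subsets.
(The vertices of the complex are the vertices of its faces, so all singletons of
vertices are automatically faces.) -/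
def IsComplex (K : Set (Finset V)) : Prop :=
  ∀ F ∈ K, ∀ G ⊆ F, G ∈ K

/-- The vertex set `V(K)` of a complex. -/
def verts (K : Set (Finset V)) : Set V :=
  {v | ∃ F ∈ K, v ∈ F}

/-- The `d`-dimensional faces (cardinality `d+1`) of `K`. -/
def dfaces (K : Set (Finset V)) (d : ℕ) : Set (Finset V) :=
  {F | F ∈ K ∧ F.card = d + 1}

/-- `K` is pure `d`-dimensional: every face is contained in a `d`-face. -/
def IsPureD (K : Set (Finset V)) (d : ℕ) : Prop :=
  ∀ F ∈ K, ∃ G ∈ dfaces K d, F ⊆ G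

/-- The complex generated by a set of facets. -/
def gen (S : Set (Finset V)) : Set (Finset V) :=
  {G | ∃ F ∈ S, G ⊆ F}

/-- The pure `d`-skeleton `K^{[d]}`: the complex whose facets are the `d`-faces of `K`. -/
def skel (K : Set (Finset V)) (d : ℕ) : Set (Finset V) :=
  gen (dfaces K d)

/-- The induced subcomplex `K_W` on a set `W` of vertices. -/
def induced (K : Set (Finset V)) (W : Set V) : Set (Finset V) :=
  {F | F ∈ K ∧ ↑F ⊆ W}

/-- Two `d`-faces of `S` are adjacent in a `d`-path if they share `d` vertices. -/
def adj (S : Set (Finset V)) (d : ℕ) (F G : Finset V) : Prop :=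
  F ∈ S ∧ G ∈ S ∧ (F ∩ G).card = d

/-- `d`-path-connectedness: any two `d`-faces are joined by a `d`-path. -/
def PathConn (K : Set (Finset V)) (d : ℕ) : Prop :=
  ∀ F ∈ dfaces K d, ∀ G ∈ dfaces K d, Relation.ReflTransGen (adj (dfaces K d) d) F G

/-- A `d`-dimensional cycle: a pure `d`-dimensional, `d`-path-connected complex in which
every `(d-1)`-face lies in an even number of `d`-faces. -/
def IsCycle (Ω : Set (Finset V)) (d : ℕ) : Prop :=
  IsComplex Ω ∧ IsPureD Ω d ∧ (dfaces Ω d).Nonempty ∧ PathConn Ω d ∧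
    ∀ f ∈ Ω, Finset.card f = d → Even {F | F ∈ dfaces Ω d ∧ f ⊆ F}.ncard

/-- A `d`-dimensional cycle in the complex `Γ`. -/
def CycleIn (Γ Ω : Set (Finset V)) (d : ℕ) : Prop :=
  Ω ⊆ Γ ∧ IsCycle Ω d

/-- Face-minimality: no strict subset of the `d`-faces of `Ω` forms a `d`-dimensional cycle. -/
def FaceMinimal (Ω : Set (Finset V)) (d : ℕ) : Prop :=
  ∀ S : Set (Finset V), S ⊂ dfaces Ω d → ¬ IsCycle (gen S) d

/-- Vertex-minimality of a cycle `Ω` in `Γ`: no `d`-dimensional cycle in `Γ` lies on a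
strict subset of the vertices of `Ω`. -/
def VertexMinimal (Γ Ω : Set (Finset V)) (d : ℕ) : Prop :=
  ∀ Ω', CycleIn Γ Ω' d → ¬ (verts Ω' ⊂ verts Ω)

/-- `d`-completeness: every `(d+1)`-subset of the vertex set is a face. -/
def DComplete (K : Set (Finset V)) (d : ℕ) : Prop :=
  ∀ S : Finset V, ↑S ⊆ verts K → S.card = d + 1 → S ∈ K

/-- A chord set `C` of the `d`-dimensional cycle `Ω` in `Γ`. -/
def ChordSet (Γ Ω : Set (Finset V)) (d : ℕ) (C : Set (Finset V)) : Prop :=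
  C ⊆ dfaces Γ d ∧ (∀ F ∈ C, F ∉ Ω) ∧ (∀ F ∈ C, ↑F ⊆ verts Ω) ∧
    ∃ (n : ℕ) (Ωi : Fin n → Set (Finset V)), 2 ≤ n ∧ (∀ i, IsCycle (Ωi i) d) ∧
      (⋃ i, dfaces (Ωi i) d) = dfaces Ω d ∪ C ∧
      (∀ F ∈ C, Even {i | F ∈ dfaces (Ωi i) d}.ncard) ∧
      (∀ F ∈ dfaces Ω d, Odd {i | F ∈ dfaces (Ωi i) d}.ncard) ∧
      (∀ i, (verts (Ωi i)).ncard < (verts Ω).ncard)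

/-- `Γ` is `d`-chorded: every face-minimal `d`-dimensional cycle in `Γ` that is not
`d`-complete has a chord set in `Γ`. -/
def DChorded (Γ : Set (Finset V)) (d : ℕ) : Prop :=
  ∀ Ω, CycleIn Γ Ω d → FaceMinimal Ω d → ¬ DComplete Ω d → ∃ C, ChordSet Γ Ω d C

/-- `Γ` is `d`-cycle-complete: every vertex-minimal `d`-dimensional cycle in `Γ` is
`d`-complete. -/
def DCycleComplete (Γ : Set (Finset V)) (d : ℕ) : Prop :=
  ∀ Ω, CycleIn Γ Ω d → VertexMinimal Γ Ω d → DComplete Ω d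

/-- The `d`-closure `Δ_d(K)` of the complex `K`, relative to the vertex set `W`:
it contains the faces of `K`, all subsets of `W` of size at most `d`, and every subset
`S` of `W` with `|S| > d+1` all of whose `(d+1)`-subsets are faces of `K`. -/
def closure (W : Set V) (K : Set (Finset V)) (d : ℕ) : Set (Finset V) :=
  K ∪ {S | ↑S ⊆ W ∧ S.card ≤ d} ∪
    {S | ↑S ⊆ W ∧ d + 1 < S.card ∧ ∀ T ⊆ S, T.card = d + 1 → T ∈ K}

/-- A `d`-dimensional tree: a pure `d`-dimensional complex with no `d`-dimensional cycles. -/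
def IsTree (K : Set (Finset V)) (d : ℕ) : Prop :=
  IsComplex K ∧ IsPureD K d ∧ ∀ Ω, ¬ CycleIn K Ω d

/-- The unsigned boundary map on chains (appropriate over rings of characteristic 2):
a face is sent to the sum of the faces obtained by deleting one vertex. -/
noncomputable def ubd {R : Type*} [AddCommMonoid R] (c : Finset V →₀ R) : Finset V →₀ R :=
  c.sum fun F a => F.sum fun v => Finsupp.single (F.erase v) a

/-- The signed (oriented) boundary map on chains, the vertices of each face being listed
in increasing order. -/
noncomputable def sbd [LinearOrder V] {R : Type*} [Ring R] (c : Finset V →₀ R) : Finset V →₀ R :=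
  c.sum fun F a =>
    F.sum fun v => Finsupp.single (F.erase v) ((-1 : R) ^ (F.filter fun w => w < v).card * a)

/-- `c` is an `i`-chain on the complex `K`: it is supported on `i`-faces of `K`. -/
def ChainOn {R : Type*} [Zero R] (K : Set (Finset V)) (i : ℕ) (c : Finset V →₀ R) : Prop :=
  ∀ F ∈ c.support, F ∈ K ∧ F.card = i + 1

/-- Vanishing of the reduced simplicial homology `H̃_i(K; R)` for the unsigned boundary
map (this is reduced simplicial homology when `R` has characteristic 2): every `i`-chain
with vanishing boundary (for `i = 0`, the boundary at the empty face is the augmentation ε)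
is the boundary of an `(i+1)`-chain. -/
def RedHomZeroU (K : Set (Finset V)) (R : Type*) [AddCommMonoid R] (i : ℕ) : Prop :=
  ∀ c : Finset V →₀ R, ChainOn K i c → ubd c = 0 →
    ∃ b : Finset V →₀ R, ChainOn K (i + 1) b ∧ ubd b = c

/-- Vanishing of the reduced simplicial homology `H̃_i(K; R)` (oriented chains). -/
def RedHomZeroS [LinearOrder V] (K : Set (Finset V)) (R : Type*) [Ring R] (i : ℕ) : Prop :=
  ∀ c : Finset V →₀ R, ChainOn K i c → sbd c = 0 →
    ∃ b : Finset V →₀ R, ChainOn K (i + 1) b ∧ sbd b = c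

/-- Orientability of a `d`-dimensional cycle: there is a choice of signs on its `d`-faces
making the resulting ℤ-chain have zero (oriented) boundary. -/
def Orientable [LinearOrder V] (Ω : Set (Finset V)) (d : ℕ) : Prop :=
  ∃ c : Finset V →₀ ℤ, ↑c.support = dfaces Ω d ∧
    (∀ F ∈ c.support, c F = 1 ∨ c F = -1) ∧ sbd c = 0

/-- Orientable-vertex-minimality of a cycle `Ω` in `Γ`: no orientable `d`-dimensional
cycle in `Γ` lies on a strict subset of the vertices of `Ω`. -/
def OrientVertexMinimal [LinearOrder V] (Γ Ω : Set (Finset V)) (d : ℕ) : Prop :=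
  ∀ Ω', CycleIn Γ Ω' d → Orientable Ω' d → ¬ (verts Ω' ⊂ verts Ω)

/-- `Γ` is orientably-`d`-cycle-complete: every orientably-vertex-minimal (orientable)
`d`-dimensional cycle in `Γ` is `d`-complete. -/
def OrientDCycleComplete [LinearOrder V] (Γ : Set (Finset V)) (d : ℕ) : Prop :=
  ∀ Ω, CycleIn Γ Ω d → Orientable Ω d → OrientVertexMinimal Γ Ω d → DComplete Ω d

/-- A minimal non-face of `K`: a subset of the vertex set that is not a face, all of whose
proper subsets are faces. -/
def MinNonFace (K : Set (Finset V)) (S : Finset V) : Prop :=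
  ↑S ⊆ verts K ∧ S ∉ K ∧ ∀ T ⊂ S, T ∈ K

end ChordedPaper

/-!
Over `𝔽₂` a `d`-cycle is a set of `d`-faces containing every `(d-1)`-face an even number of
times. Each of its `d`-path components is a cycle and contains a face-minimal cycle `Ω`, whose
removal leaves a smaller cycle; so it suffices that face-minimal cycles of `Γ` on `W` bound in
`Δ_d(Γ)_W`. If `Ω` is `d`-complete, every `(d+2)`-set of its vertices is a face of `Δ_d(Γ)`,
and the cone over a vertex of `Ω` bounds it; otherwise a chord set writes `Ω` as a mod-2 sum of
cycles on fewer vertices, and we induct on the number of vertices. A field of characteristic 2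
is an `𝔽₂`-vector space, so its cycles bound coordinatewise. In degrees `i ≤ d - 2` the complex
`Δ_d(Γ)_W` contains every set of at most `d` vertices of `W`, so the cone over any vertex of an
`i`-cycle bounds it.
-/

namespace ChordedPaper

variable {V : Type*}

section Chains

variable {R : Type*} [AddCommMonoid R] {K : Set (Finset V)} {i : ℕ}

lemma chainOn_zero : ChainOn K i (0 : Finset V →₀ R) := by
  simp [ChainOn]

lemma ChainOn.add {c c' : Finset V →₀ R} (hc : ChainOn K i c) (hc' : ChainOn K i c') :
    ChainOn K i (c + c') := by
  classical
  exact fun F hF => (Finset.mem_union.mp (Finsupp.support_add hF)).elim (hc F) (hc' F)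

lemma ChainOn.mapRange {S : Type*} [Zero S] {c : Finset V →₀ R} (hc : ChainOn K i c)
    (f : R → S) (hf : f 0 = 0) : ChainOn K i (c.mapRange f hf) := fun F hF =>
  hc F (Finsupp.support_mapRange hF)

variable [DecidableEq V]

def IsBoundary (K : Set (Finset V)) (i : ℕ) (c : Finset V →₀ R) : Prop :=
  ∃ b : Finset V →₀ R, ChainOn K (i + 1) b ∧ ubd b = c

lemma ubd_zero : ubd (0 : Finset V →₀ R) = 0 :=
  Finsupp.sum_zero_index

lemma ubd_add (c c' : Finset V →₀ R) : ubd (c + c') = ubd c + ubd c' :=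
  Finsupp.sum_add_index' (fun _ => by simp)
    (fun _ _ _ => by simp [Finsupp.single_add, Finset.sum_add_distrib])

lemma ubd_single (F : Finset V) (a : R) :
    ubd (Finsupp.single F a) = ∑ v ∈ F, Finsupp.single (F.erase v) a :=
  Finsupp.sum_single_index (by simp)

lemma ubd_single_apply (F f : Finset V) (a : R) :
    ubd (Finsupp.single F a) f = if f ⊆ F ∧ f.card + 1 = F.card then a else 0 := by
  rw [ubd_single, Finsupp.finsetSum_apply]
  split_ifs with h
  · obtain ⟨w, hw, rfl⟩ := Finset.exists_eq_insert_iff.mpr h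
    rw [Finset.sum_insert hw, Finset.erase_insert hw, Finsupp.single_eq_same,
      Finset.sum_eq_zero fun v hv => Finsupp.single_eq_of_ne' fun heq => hw ?_, add_zero]
    rw [← heq, Finset.erase_insert_of_ne (ne_of_mem_of_not_mem hv hw).symm]
    exact Finset.mem_insert_self w _
  · refine Finset.sum_eq_zero fun v hv => Finsupp.single_eq_of_ne' ?_
    rintro rfl
    exact h ⟨Finset.erase_subset v F, Finset.card_erase_add_one hv⟩

lemma ubd_apply (c : Finset V →₀ R) (f : Finset V) :
    ubd c f = ∑ F ∈ c.support, if f ⊆ F ∧ f.card + 1 = F.card then c F else 0 := by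
  rw [ubd, Finsupp.sum, Finsupp.finsetSum_apply]
  exact Finset.sum_congr rfl fun F _ => by rw [← ubd_single, ubd_single_apply]

lemma ubd_mapRange {S F : Type*} [AddCommMonoid S] [FunLike F R S] [AddMonoidHomClass F R S]
    (f : F) (c : Finset V →₀ R) :
    ubd (c.mapRange f (map_zero f)) = (ubd c).mapRange f (map_zero f) := by
  induction c using Finsupp.induction_linear with
  | zero => simp [ubd_zero]
  | add c c' hc hc' => simp [Finsupp.mapRange_add (map_add f), ubd_add, hc, hc']
  | single F a => simp [ubd_single, Finsupp.mapRange_finsetSum]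

lemma isBoundary_zero : IsBoundary K i (0 : Finset V →₀ R) :=
  ⟨0, chainOn_zero, ubd_zero⟩

lemma IsBoundary.add {c c' : Finset V →₀ R} (hc : IsBoundary K i c) (hc' : IsBoundary K i c') :
    IsBoundary K i (c + c') := by
  obtain ⟨b, hb, rfl⟩ := hc
  obtain ⟨b', hb', rfl⟩ := hc'
  exact ⟨b + b', hb.add hb', ubd_add b b'⟩

lemma isBoundary_sum {ι : Type*} {s : Finset ι} {g : ι → Finset V →₀ R}
    (h : ∀ x ∈ s, IsBoundary K i (g x)) : IsBoundary K i (∑ x ∈ s, g x) :=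
  Finset.sum_induction g _ (fun _ _ => IsBoundary.add) isBoundary_zero h

lemma IsBoundary.mapRange {S F : Type*} [AddCommMonoid S] [FunLike F R S]
    [AddMonoidHomClass F R S] {c : Finset V →₀ R} (hc : IsBoundary K i c) (f : F) :
    IsBoundary K i (c.mapRange f (map_zero f)) := by
  obtain ⟨b, hb, rfl⟩ := hc
  exact ⟨b.mapRange f (map_zero f), hb.mapRange f (map_zero f), ubd_mapRange f b⟩

noncomputable def cone (v : V) : (Finset V →₀ R) →+ (Finset V →₀ R) :=
  Finsupp.liftAddHom fun F => if v ∈ F then 0 else Finsupp.singleAddHom (insert v F)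

lemma cone_single (v : V) (F : Finset V) (a : R) :
    cone v (Finsupp.single F a) = if v ∈ F then 0 else Finsupp.single (insert v F) a := by
  rw [cone, Finsupp.liftAddHom_apply_single]
  split_ifs <;> rfl

lemma exists_of_mem_support_cone {v : V} {c : Finset V →₀ R} {G : Finset V}
    (hG : G ∈ (cone v c).support) : ∃ F ∈ c.support, v ∉ F ∧ insert v F = G := by
  rw [cone, Finsupp.liftAddHom_apply] at hG
  obtain ⟨F, hF, hGF⟩ := Finset.mem_biUnion.mp (Finsupp.support_sum hG)
  by_cases hv : v ∈ F
  · simp [hv] at hGF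
  · rw [if_neg hv, Finsupp.singleAddHom_apply] at hGF
    exact ⟨F, hF, hv, (Finset.mem_singleton.mp (Finsupp.support_single_subset hGF)).symm⟩

end Chains

section CharTwo

variable {R : Type*} [Semiring R] [CharP R 2] [DecidableEq V] {K : Set (Finset V)} {i : ℕ}

lemma ubd_cone_add_cone_ubd (v : V) (c : Finset V →₀ R) :
    ubd (cone v c) + cone v (ubd c) = c := by
  induction c using Finsupp.induction_linear with
  | zero => simp [ubd_zero]
  | add c c' hc hc' => rw [map_add, ubd_add, ubd_add, map_add, add_add_add_comm, hc, hc']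
  | single F a =>
    rw [ubd_single, map_sum, cone_single]
    by_cases hv : v ∈ F
    · rw [if_pos hv, ubd_zero, zero_add, Finset.sum_eq_single_of_mem v hv, cone_single,
        if_neg (Finset.notMem_erase v F), Finset.insert_erase hv]
      intro w _ hwv
      rw [cone_single, if_pos (Finset.mem_erase.mpr ⟨fun h => hwv h.symm, hv⟩)]
    · have hchar : ∀ c : Finset V →₀ R, c + c = 0 := fun c => by
        ext
        simp [CharTwo.add_self_eq_zero]
      have hcone : ∀ w ∈ F, cone v (Finsupp.single (F.erase w) a) =
          Finsupp.single ((insert v F).erase w) a := fun w hw => by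
        rw [cone_single, if_neg fun h => hv (Finset.mem_of_mem_erase h),
          Finset.erase_insert_of_ne (ne_of_mem_of_not_mem hw hv).symm]
      rw [if_neg hv, ubd_single, Finset.sum_insert hv, Finset.erase_insert hv,
        Finset.sum_congr rfl hcone, add_assoc, hchar, add_zero]

lemma isBoundary_of_cone {c : Finset V →₀ R} (v : V) (hc : ChainOn K i c) (hcyc : ubd c = 0)
    (hcone : ∀ F ∈ c.support, v ∉ F → insert v F ∈ K) : IsBoundary K i c := by
  refine ⟨cone v c, fun G hG => ?_, ?_⟩
  · obtain ⟨F, hF, hvF, rfl⟩ := exists_of_mem_support_cone hG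
    exact ⟨hcone F hF hvF, by rw [Finset.card_insert_of_notMem hvF, (hc F hF).2]⟩
  · simpa [hcyc] using ubd_cone_add_cone_ubd v c

end CharTwo

theorem redHomZeroU_of_zmod_two [DecidableEq V] {K : Set (Finset V)} {i : ℕ} {M : Type*}
    [AddCommGroup M] [Module (ZMod 2) M] (h : RedHomZeroU K (ZMod 2) i) : RedHomZeroU K M i := by
  classical
  intro c hc hcyc
  let b := Module.Basis.ofVectorSpace (ZMod 2) M
  let J := c.support.biUnion fun F => (b.repr (c F)).support
  have hJ : ∀ F, (b.repr (c F)).support ⊆ J := fun F => by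
    by_cases hF : F ∈ c.support
    · exact Finset.subset_biUnion_of_mem (fun F => (b.repr (c F)).support) hF
    · simp [Finsupp.notMem_support_iff.mp hF]
  have hc_eq : c = ∑ j ∈ J, (c.mapRange (b.coord j) (map_zero _)).mapRange
      (LinearMap.toSpanSingleton (ZMod 2) M (b j)) (map_zero _) := by
    ext F
    conv_lhs => rw [← b.linearCombination_repr (c F)]
    rw [Finsupp.linearCombination_apply, Finsupp.sum_of_support_subset _ (hJ F) _ (by simp)]
    simp [Finsupp.finsetSum_apply]
  rw [hc_eq]
  refine isBoundary_sum fun j _ =>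
    (show IsBoundary K i _ from h _ (hc.mapRange _ _) ?_).mapRange _
  rw [ubd_mapRange, hcyc, Finsupp.mapRange_zero]

section IndicatorChain

variable [Finite V]

noncomputable def indicatorChain (A : Set (Finset V)) : Finset V →₀ ZMod 2 :=
  Finsupp.equivFunOnFinite.symm (A.indicator 1)

lemma indicatorChain_apply (A : Set (Finset V)) (F : Finset V) :
    indicatorChain A F = A.indicator 1 F :=
  rfl

lemma coe_support_indicatorChain (A : Set (Finset V)) : ↑(indicatorChain A).support = A := by
  ext F
  simp [indicatorChain_apply]

lemma indicatorChain_support (z : Finset V →₀ ZMod 2) : indicatorChain ↑z.support = z := by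
  ext F
  have hbool : ∀ a : ZMod 2, a ≠ 0 → a = 1 := by decide
  by_cases hF : z F = 0 <;> simp [indicatorChain_apply, hF, hbool]

lemma indicatorChain_empty : indicatorChain (∅ : Set (Finset V)) = 0 := by
  ext F
  simp [indicatorChain_apply]

lemma indicatorChain_diff_add {A T : Set (Finset V)} (hTA : T ⊆ A) :
    indicatorChain (A \ T) + indicatorChain T = indicatorChain A := by
  ext F
  by_cases hT : F ∈ T
  · simp [indicatorChain_apply, hT, hTA hT]
  · by_cases hA : F ∈ A <;> simp [indicatorChain_apply, hT, hA]

lemma sum_indicatorChain_apply {ι : Type*} [Fintype ι] (A : ι → Set (Finset V))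
    (F : Finset V) :
    (∑ i, indicatorChain (A i)) F = ({i | F ∈ A i}.ncard : ZMod 2) := by
  classical
  rw [Finsupp.finsetSum_apply]
  simp only [indicatorChain_apply, Set.indicator_apply, Pi.one_apply]
  rw [Finset.sum_boole, ← Set.ncard_coe_finset]
  congr
  ext
  simp

lemma ubd_indicatorChain_apply [DecidableEq V] (A : Set (Finset V)) (f : Finset V) :
    ubd (indicatorChain A) f =
      ({F | F ∈ A ∧ f ⊆ F ∧ f.card + 1 = F.card}.ncard : ZMod 2) := by
  classical
  have hone : ∀ F ∈ (indicatorChain A).support, indicatorChain A F = 1 := fun F hF => by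
    rw [← Finset.mem_coe, coe_support_indicatorChain] at hF
    simp [indicatorChain_apply, hF]
  rw [ubd_apply, Finset.sum_congr rfl fun F hF => by rw [hone F hF], Finset.sum_boole,
    ← Set.ncard_coe_finset, Finset.coe_filter]
  simp_rw [← Finset.mem_coe, coe_support_indicatorChain]

lemma ubd_indicatorChain_eq_zero_iff [DecidableEq V] {A : Set (Finset V)} {d : ℕ}
    (hA : ∀ F ∈ A, F.card = d + 1) :
    ubd (indicatorChain A) = 0 ↔
      ∀ f : Finset V, f.card = d → Even {F | F ∈ A ∧ f ⊆ F}.ncard := by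
  have hset : ∀ f : Finset V, {F | F ∈ A ∧ f ⊆ F ∧ f.card + 1 = F.card} =
      if f.card = d then {F | F ∈ A ∧ f ⊆ F} else ∅ := fun f => by
    ext F
    split_ifs <;> simp <;> grind
  simp only [Finsupp.ext_iff, ubd_indicatorChain_apply, hset, Finsupp.coe_zero, Pi.zero_apply,
    ZMod.natCast_eq_zero_iff_even]
  refine ⟨fun h f hf => by simpa [hf] using h f, fun h f => ?_⟩
  split_ifs with hf
  · exact h f hf
  · simp

end IndicatorChain

section Cycles

variable {d : ℕ}

lemma dfaces_gen {A : Set (Finset V)} (hA : ∀ F ∈ A, F.card = d + 1) :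
    dfaces (gen A) d = A := by
  ext G
  refine ⟨fun ⟨⟨F, hF, hGF⟩, hG⟩ => ?_, fun hG => ⟨⟨G, hG, subset_rfl⟩, hA G hG⟩⟩
  rwa [Finset.eq_of_subset_of_card_le hGF (by rw [hA F hF, hG])]

lemma isComplex_gen (A : Set (Finset V)) : IsComplex (gen A) :=
  fun _ ⟨F', hF', hFF'⟩ _ hGF => ⟨F', hF', hGF.trans hFF'⟩

lemma isPureD_gen {A : Set (Finset V)} (hA : ∀ F ∈ A, F.card = d + 1) : IsPureD (gen A) d :=
  fun _ ⟨F', hF', hFF'⟩ => ⟨F', (dfaces_gen hA).symm ▸ hF', hFF'⟩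

lemma gen_subset {K A : Set (Finset V)} (hK : IsComplex K) (hA : A ⊆ K) : gen A ⊆ K :=
  fun _ ⟨F, hF, hGF⟩ => hK F (hA hF) _ hGF

lemma verts_gen (A : Set (Finset V)) : verts (gen A) = verts A := by
  ext v
  exact ⟨fun ⟨_, ⟨F, hF, hGF⟩, hv⟩ => ⟨F, hF, hGF hv⟩,
    fun ⟨F, hF, hv⟩ => ⟨F, ⟨F, hF, subset_rfl⟩, hv⟩⟩

lemma verts_mono {A B : Set (Finset V)} (h : A ⊆ B) : verts A ⊆ verts B :=
  fun _ ⟨F, hF, hv⟩ => ⟨F, h hF, hv⟩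

lemma IsCycle.ubd_indicatorChain_eq_zero [DecidableEq V] [Finite V] {Ω : Set (Finset V)}
    (h : IsCycle Ω d) : ubd (indicatorChain (dfaces Ω d)) = 0 := by
  refine (ubd_indicatorChain_eq_zero_iff fun F hF => hF.2).mpr fun f hf => ?_
  by_cases hfΩ : f ∈ Ω
  · exact h.2.2.2.2 f hfΩ hf
  · have hempty : {F | F ∈ dfaces Ω d ∧ f ⊆ F} = ∅ :=
      Set.eq_empty_of_forall_notMem fun F hF => hfΩ (h.1 F hF.1.1 f hF.2)
    rw [hempty, Set.ncard_empty]
    exact Even.zero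

lemma card_inter_eq_of_ne [DecidableEq V] {F G f : Finset V} (hF : F.card = d + 1)
    (hG : G.card = d + 1) (hf : f.card = d) (hfF : f ⊆ F) (hfG : f ⊆ G) (hne : F ≠ G) :
    (F ∩ G).card = d := by
  have hle : d ≤ (F ∩ G).card := hf ▸ Finset.card_le_card (Finset.subset_inter hfF hfG)
  have hlt : (F ∩ G).card < F.card := by
    refine Finset.card_lt_card (Finset.inter_subset_left.ssubset_of_ne fun h => hne ?_)
    exact Finset.eq_of_subset_of_card_le (h ▸ Finset.inter_subset_right) (by rw [hF, hG])
  omega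

lemma exists_isCycle_gen_subset [DecidableEq V] {A : Set (Finset V)} {F₀ : Finset V}
    (hA : ∀ F ∈ A, F.card = d + 1)
    (hpar : ∀ f : Finset V, f.card = d → Even {F | F ∈ A ∧ f ⊆ F}.ncard) (hF₀ : F₀ ∈ A) :
    ∃ T ⊆ A, IsCycle (gen T) d := by
  set T := {G | G ∈ A ∧ Relation.ReflTransGen (adj A d) F₀ G}
  have hTd : ∀ F ∈ T, F.card = d + 1 := fun F hF => hA F hF.1
  have hpath : ∀ G, Relation.ReflTransGen (adj A d) F₀ G →
      Relation.ReflTransGen (adj T d) F₀ G := by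
    intro G hG
    induction hG with
    | refl => exact .refl
    | tail hpath hstep ih =>
      exact ih.tail ⟨⟨hstep.1, hpath⟩, ⟨hstep.2.1, hpath.tail hstep⟩, hstep.2.2⟩
  have : Std.Symm (adj T d) := ⟨fun _ _ ⟨h₁, h₂, h₃⟩ => ⟨h₂, h₁, by rwa [Finset.inter_comm]⟩⟩
  have hlink : ∀ f : Finset V, f.card = d → ∀ F ∈ T, f ⊆ F →
      {G | G ∈ A ∧ f ⊆ G} = {G | G ∈ T ∧ f ⊆ G} := by
    intro f hf F hF hfF
    ext G
    refine ⟨fun ⟨hG, hfG⟩ => ⟨⟨hG, ?_⟩, hfG⟩, fun ⟨hG, hfG⟩ => ⟨hG.1, hfG⟩⟩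
    by_cases hFG : F = G
    · exact hFG ▸ hF.2
    · exact hF.2.tail ⟨hF.1, hG, card_inter_eq_of_ne (hA F hF.1) (hA G hG) hf hfF hfG hFG⟩
  refine ⟨T, fun G hG => hG.1, isComplex_gen T, isPureD_gen hTd, ?_, ?_, ?_⟩
  · exact ⟨F₀, by rw [dfaces_gen hTd]; exact ⟨hF₀, .refl⟩⟩
  · rw [PathConn, dfaces_gen hTd]
    exact fun F hF G hG =>
      (Relation.ReflTransGen.stdSymm.symm _ _ (hpath F hF.2)).trans (hpath G hG.2)
  · rintro f ⟨F, hF, hfF⟩ hf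
    rw [dfaces_gen hTd, ← hlink f hf F hF hfF]
    exact hpar f hf

lemma exists_faceMinimal_subset [DecidableEq V] [Finite V] {A : Set (Finset V)}
    (hA : ∀ F ∈ A, F.card = d + 1) (hcyc : IsCycle (gen A) d) :
    ∃ T ⊆ A, IsCycle (gen T) d ∧ FaceMinimal (gen T) d := by
  obtain ⟨T, -, hT⟩ :=
    exists_minimal_le_of_wellFoundedLT (fun T => T ⊆ A ∧ IsCycle (gen T) d) A ⟨subset_rfl, hcyc⟩
  refine ⟨T, hT.prop.1, hT.prop.2, fun S hS hScyc => ?_⟩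
  rw [dfaces_gen fun F hF => hA F (hT.prop.1 hF)] at hS
  exact hS.not_ge (hT.2 ⟨hS.1.trans hT.prop.1, hScyc⟩ hS.1)

lemma isBoundary_of_forall_faceMinimal [DecidableEq V] [Finite V] {K A : Set (Finset V)}
    (hA : ∀ F ∈ A, F.card = d + 1) (hcyc : ubd (indicatorChain A) = 0)
    (h : ∀ T ⊆ A, IsCycle (gen T) d → FaceMinimal (gen T) d →
      IsBoundary K d (indicatorChain T)) :
    IsBoundary K d (indicatorChain A) := by
  induction hn : A.ncard using Nat.strong_induction_on generalizing A with
  | _ n ih =>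
  rcases A.eq_empty_or_nonempty with rfl | ⟨F₀, hF₀⟩
  · rw [indicatorChain_empty]
    exact isBoundary_zero
  obtain ⟨T₀, hT₀A, hT₀⟩ :=
    exists_isCycle_gen_subset hA ((ubd_indicatorChain_eq_zero_iff hA).mp hcyc) hF₀
  obtain ⟨T, hTT₀, hT, hTmin⟩ := exists_faceMinimal_subset (fun F hF => hA F (hT₀A hF)) hT₀
  have hTA := hTT₀.trans hT₀A
  have hTd : ∀ F ∈ T, F.card = d + 1 := fun F hF => hA F (hTA hF)
  have hTcyc : ubd (indicatorChain T) = 0 := dfaces_gen hTd ▸ hT.ubd_indicatorChain_eq_zero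
  have hTne : T.Nonempty := dfaces_gen hTd ▸ hT.2.2.1
  rw [← indicatorChain_diff_add hTA]
  refine IsBoundary.add (ih _ ?_ (fun F hF => hA F hF.1) ?_ (fun T' hT' => h T' (hT'.trans
    Set.sdiff_subset)) rfl) (h T hTA hT hTmin)
  · rw [← hn, Set.ncard_sdiff hTA]
    have := (Set.ncard_pos T.toFinite).mpr hTne
    have := Set.ncard_le_ncard hTA
    omega
  · rwa [← indicatorChain_diff_add hTA, ubd_add, hTcyc, add_zero] at hcyc

end Cycles

section Closure

variable {d : ℕ}

lemma dfaces_induced_closure (U : Set V) (Γ : Set (Finset V)) (W : Set V) :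
    dfaces (induced (closure U Γ d) W) d = dfaces (induced Γ W) d := by
  ext F
  simp only [dfaces, induced, closure, Set.mem_ofPred_eq, Set.mem_union]
  constructor
  · rintro ⟨⟨(hF | hF) | hF, hFW⟩, hcard⟩ <;> first | exact ⟨⟨hF, hFW⟩, hcard⟩ | omega
  · rintro ⟨⟨hF, hFW⟩, hcard⟩
    exact ⟨⟨Or.inl (Or.inl hF), hFW⟩, hcard⟩

lemma mem_induced_closure_of_card_le {U W : Set V} {Γ : Set (Finset V)} {S : Finset V}
    (hW : W ⊆ U) (hSW : ↑S ⊆ W) (hS : S.card ≤ d) : S ∈ induced (closure U Γ d) W :=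
  ⟨Or.inl (Or.inr ⟨hSW.trans hW, hS⟩), hSW⟩

lemma mem_induced_closure_of_forall_subset {U W : Set V} {Γ : Set (Finset V)} {S : Finset V}
    (hW : W ⊆ U) (hSW : ↑S ⊆ W) (hS : d + 1 < S.card)
    (hsub : ∀ T ⊆ S, T.card = d + 1 → T ∈ Γ) : S ∈ induced (closure U Γ d) W :=
  ⟨Or.inr ⟨hSW.trans hW, hS, hsub⟩, hSW⟩

end Closure

section Chorded

variable [DecidableEq V] {d : ℕ}

theorem redHomZeroU_induced_closure_of_add_two_le {R : Type*} [Semiring R] [CharP R 2]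
    {U W : Set V} (Γ : Set (Finset V)) (hW : W ⊆ U) {i : ℕ} (hi : i + 2 ≤ d) :
    RedHomZeroU (induced (closure U Γ d) W) R i := by
  intro c hc hcyc
  rcases c.support.eq_empty_or_nonempty with hempty | ⟨F₀, hF₀⟩
  · rw [Finsupp.support_eq_empty.mp hempty]
    exact isBoundary_zero
  obtain ⟨v, hv⟩ : F₀.Nonempty := Finset.card_pos.mp (by rw [(hc F₀ hF₀).2]; omega)
  refine isBoundary_of_cone v hc hcyc fun F hF hvF => ?_
  refine mem_induced_closure_of_card_le hW ?_
    (by rw [Finset.card_insert_of_notMem hvF, (hc F hF).2]; omega)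
  rw [Finset.coe_insert]
  exact Set.insert_subset ((hc F₀ hF₀).1.2 hv) (hc F hF).1.2

variable [Finite V]

lemma isBoundary_of_dComplete {U W : Set V} {Γ Ω : Set (Finset V)} (hW : W ⊆ U)
    (hΩ : CycleIn Γ Ω d) (hdc : DComplete Ω d) (hΩW : verts Ω ⊆ W) :
    IsBoundary (induced (closure U Γ d) W) d (indicatorChain (dfaces Ω d)) := by
  obtain ⟨F₀, hF₀⟩ := hΩ.2.2.2.1
  obtain ⟨v, hv⟩ : F₀.Nonempty := Finset.card_pos.mp (by rw [hF₀.2]; omega)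
  refine isBoundary_of_cone v (fun F hF => ?_) hΩ.2.ubd_indicatorChain_eq_zero fun F hF hvF => ?_
    <;> rw [← Finset.mem_coe, coe_support_indicatorChain] at hF
  · exact ⟨⟨Or.inl (Or.inl (hΩ.1 hF.1)), fun x hx => hΩW ⟨F, hF.1, hx⟩⟩, hF.2⟩
  · have hsub : ↑(insert v F) ⊆ verts Ω := by
      rw [Finset.coe_insert]
      exact Set.insert_subset ⟨F₀, hF₀.1, hv⟩ fun x hx => ⟨F, hF.1, hx⟩
    refine mem_induced_closure_of_forall_subset hW (hsub.trans hΩW)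
      (by rw [Finset.card_insert_of_notMem hvF, hF.2]; omega) fun T hT hTcard => ?_
    exact hΩ.1 (hdc T ((Finset.coe_subset.mpr hT).trans hsub) hTcard)

lemma ChordSet.exists_indicatorChain_eq_sum {Γ Ω C : Set (Finset V)} (h : ChordSet Γ Ω d C) :
    ∃ (n : ℕ) (Ωi : Fin n → Set (Finset V)), (∀ i, IsCycle (Ωi i) d) ∧
      (∀ i, dfaces (Ωi i) d ⊆ dfaces Ω d ∪ C) ∧
      (∀ i, (verts (Ωi i)).ncard < (verts Ω).ncard) ∧
      indicatorChain (dfaces Ω d) = ∑ i, indicatorChain (dfaces (Ωi i) d) := by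
  obtain ⟨-, -, -, n, Ωi, -, hcyc, hunion, heven, hodd, hlt⟩ := h
  have hsub : ∀ i, dfaces (Ωi i) d ⊆ dfaces Ω d ∪ C :=
    fun i => hunion ▸ Set.subset_iUnion (fun i => dfaces (Ωi i) d) i
  refine ⟨n, Ωi, hcyc, hsub, hlt, ?_⟩
  ext F
  rw [sum_indicatorChain_apply, indicatorChain_apply]
  by_cases hF : F ∈ dfaces Ω d
  · rw [Set.indicator_of_mem hF, Pi.one_apply, (hodd F hF).natCast_zmod_two]
  rw [Set.indicator_of_notMem hF]
  by_cases hFC : F ∈ C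
  · exact (ZMod.natCast_eq_zero_iff_even.mpr (heven F hFC)).symm
  · have hempty : {i | F ∈ dfaces (Ωi i) d} = ∅ :=
      Set.eq_empty_of_forall_notMem fun i hi => (hsub i hi).elim hF hFC
    rw [hempty, Set.ncard_empty, Nat.cast_zero]

theorem isBoundary_indicatorChain_of_dChorded {U W : Set V} {Γ : Set (Finset V)}
    (hcomplex : IsComplex Γ) (hchorded : DChorded Γ d) (hW : W ⊆ U) {A : Set (Finset V)}
    (hA : A ⊆ dfaces (induced Γ W) d) (hcyc : ubd (indicatorChain A) = 0) :
    IsBoundary (induced (closure U Γ d) W) d (indicatorChain A) := by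
  induction hn : (verts A).ncard using Nat.strong_induction_on generalizing A with
  | _ n ih =>
  refine isBoundary_of_forall_faceMinimal (fun F hF => (hA hF).2) hcyc fun T hTA hT hTmin => ?_
  have hTd : ∀ F ∈ T, F.card = d + 1 := fun F hF => (hA (hTA hF)).2
  have hΩ : CycleIn Γ (gen T) d := ⟨gen_subset hcomplex fun F hF => (hA (hTA hF)).1.1, hT⟩
  have hΩW : verts (gen T) ⊆ W := by
    rw [verts_gen]
    exact fun v ⟨F, hF, hv⟩ => (hA (hTA hF)).1.2 hv
  rw [← dfaces_gen hTd]
  by_cases hdc : DComplete (gen T) d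
  · exact isBoundary_of_dComplete hW hΩ hdc hΩW
  obtain ⟨C, hC⟩ := hchorded _ hΩ hTmin hdc
  obtain ⟨m, Ωi, hΩi, hsub, hlt, hsum⟩ := hC.exists_indicatorChain_eq_sum
  rw [hsum]
  refine isBoundary_sum fun i _ => ih _ ?_ (fun F hF => ?_) (hΩi i).ubd_indicatorChain_eq_zero rfl
  · calc (verts (dfaces (Ωi i) d)).ncard ≤ (verts (Ωi i)).ncard :=
          Set.ncard_le_ncard (verts_mono fun F hF => hF.1)
      _ < (verts (gen T)).ncard := hlt i
      _ ≤ n := hn ▸ Set.ncard_le_ncard (verts_gen T ▸ verts_mono hTA)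
  · rcases hsub i hF with hF | hF
    · rw [dfaces_gen hTd] at hF
      exact hA (hTA hF)
    · exact ⟨⟨(hC.1 hF).1, (hC.2.2.1 F hF).trans hΩW⟩, (hC.1 hF).2⟩

theorem redHomZeroU_induced_closure_of_dChorded {U W : Set V} {Γ : Set (Finset V)}
    (hcomplex : IsComplex Γ) (hchorded : DChorded Γ d) (hW : W ⊆ U) :
    RedHomZeroU (induced (closure U Γ d) W) (ZMod 2) d := by
  intro z hz hcyc
  rw [← indicatorChain_support z] at hcyc ⊢
  refine isBoundary_indicatorChain_of_dChorded hcomplex hchorded hW (fun F hF => ?_) hcyc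
  rw [← dfaces_induced_closure U]
  exact hz F hF

end Chorded

theorem dChorded_vanishing_homology_general {V : Type*} [DecidableEq V] [Fintype V]
    (Γ : Set (Finset V)) (d : ℕ)
    (hcomplex : IsComplex Γ) (hchorded : DChorded Γ d)
    (W : Set V) (hW : W ⊆ verts Γ)
    (k : Type*) [Field k] [CharP k 2]
    (i : ℕ) (hi : i + 2 ≤ d ∨ i = d) :
    RedHomZeroU (induced (closure (verts Γ) Γ d) W) k i := by
  rcases hi with hi | rfl
  · exact redHomZeroU_induced_closure_of_add_two_le Γ hW hi
  · let : Module (ZMod 2) k := (ZMod.algebra k 2).toModule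
    exact redHomZeroU_of_zmod_two (redHomZeroU_induced_closure_of_dChorded hcomplex hchorded hW)

/-- Proposition 5.3: if `Γ` is `d`-chorded then for every `W ⊆ V(Γ)` and
every field `k` of characteristic 2, `H̃_i(Δ_d(Γ)_W; k) = 0` for `0 ≤ i ≤ d-2` and
`i = d`. -/
theorem dChorded_vanishing_homology {V : Type*} [DecidableEq V] [Fintype V]
    (Γ : Set (Finset V)) (d : ℕ)
    (hcomplex : IsComplex Γ) (hpure : IsPureD Γ d) (hchorded : DChorded Γ d)
    (W : Set V) (hW : W ⊆ verts Γ)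
    (k : Type*) [Field k] [CharP k 2]
    (i : ℕ) (hi : i + 2 ≤ d ∨ i = d) :
    RedHomZeroU (induced (closure (verts Γ) Γ d) W) k i :=
  dChorded_vanishing_homology_general Γ d hcomplex hchorded W hW k i hi

end ChordedPaper
end

section
/- Let Γ be a simplicial complex with Γ = Δ_d(Γ^{[d]}). If for every subset W of the vertex set of Γ the reduced simplicial homology over ℤ/2ℤ satisfies H̃_d(Γ_W; ℤ/2ℤ) = 0 (as holds whenever the Stanley-Reisner ideal of Γ has a (d+1)-linear resolution over a field of characteristic 2), then the pure d-skeleton Γ^{[d]} is d-chorded. -/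
open Finset

/-!
The `ℤ/2`-sum of the `d`-faces of a cycle `Ω` is a `d`-cycle of the induced subcomplex
`Γ_{V(Ω)}`, hence the boundary of a sum of `(d+1)`-faces `σ₁, …, σₙ` of `Γ` on the
vertices of `Ω`. The boundaries `∂σᵢ` are `d`-cycles on `d + 2` vertices; the `d`-faces
of `Ω` lie in an odd number of them and all other `d`-faces in an even number, so the
remaining `d`-faces of the `∂σᵢ` form a chord set. A cycle on at most `d + 2` vertices
is `d`-complete, so `Ω` has at least `d + 3` vertices, which makes each `∂σᵢ` smaller
than `Ω` and forces `n ≥ 2`.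
-/

namespace ChordedPaper

variable {V : Type*}

lemma dfaces_skel (Γ : Set (Finset V)) (d : ℕ) : dfaces (skel Γ d) d = dfaces Γ d := by
  ext F
  constructor
  · rintro ⟨⟨G, hG, hFG⟩, hF⟩
    rwa [eq_of_subset_of_card_le hFG (hG.2.trans hF.symm).le]
  · rintro ⟨hF, hFc⟩
    exact ⟨⟨F, ⟨hF, hFc⟩, subset_refl F⟩, hFc⟩

lemma verts_subset_of_forall_dfaces_subset {Ω : Set (Finset V)} {d : ℕ} {X : Set V}
    (hpure : IsPureD Ω d) (h : ∀ D ∈ dfaces Ω d, ↑D ⊆ X) : verts Ω ⊆ X := by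
  rintro v ⟨A, hA, hvA⟩
  obtain ⟨D, hD, hAD⟩ := hpure A hA
  exact h D hD (hAD hvA)

lemma two_le_card_of_forall_dfaces_subset {Ω : Set (Finset V)} {d : ℕ}
    {t : Finset (Finset V)} (hpure : IsPureD Ω d) (hne : (dfaces Ω d).Nonempty)
    (hbig : d + 2 < (verts Ω).ncard) (ht : ∀ F ∈ t, #F = d + 2)
    (hcover : ∀ D ∈ dfaces Ω d, ∃ F ∈ t, D ⊆ F) : 2 ≤ #t := by
  by_contra! hlt
  obtain ⟨F, hF, -⟩ := hcover _ hne.some_mem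
  have hsub : verts Ω ⊆ ↑F := by
    refine verts_subset_of_forall_dfaces_subset hpure fun D hD => ?_
    obtain ⟨F', hF', hDF'⟩ := hcover D hD
    rw [card_le_one.mp (by omega) F' hF' F hF] at hDF'
    exact coe_subset.mpr hDF'
  have := Set.ncard_le_ncard hsub F.finite_toSet
  rw [Set.ncard_coe_finset, ht F hF] at this
  omega

def simplexBoundary (F : Finset V) : Set (Finset V) := {S | S ⊂ F}

lemma dfaces_simplexBoundary {F : Finset V} {d : ℕ} (hF : #F = d + 2) :
    dfaces (simplexBoundary F) d = {S | S ⊆ F ∧ #S = d + 1} := by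
  ext S
  refine ⟨fun ⟨hS, hSc⟩ => ⟨hS.subset, hSc⟩, fun ⟨hS, hSc⟩ => ⟨?_, hSc⟩⟩
  exact Finset.ssubset_iff_subset_ne.mpr ⟨hS, by rintro rfl; omega⟩

lemma verts_simplexBoundary {F : Finset V} (hF : 2 ≤ #F) : verts (simplexBoundary F) = ↑F := by
  ext v
  refine ⟨fun ⟨G, hG, hv⟩ => (show G ⊂ F from hG).subset hv,
    fun hv => ⟨{v}, ?_, mem_singleton_self v⟩⟩
  refine Finset.ssubset_iff_subset_ne.mpr ⟨singleton_subset_iff.mpr hv, ?_⟩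
  rintro rfl
  simp at hF

variable [DecidableEq V]

lemma card_inter_eq_of_ne_s8 {s t u : Finset V} {n : ℕ} (hs : s ⊆ u) (ht : t ⊆ u)
    (hu : #u ≤ n + 2) (hsc : #s = n + 1) (htc : #t = n + 1) (hne : s ≠ t) :
    #(s ∩ t) = n := by
  have hts : ¬ t ⊆ s := fun h => hne (eq_of_subset_of_card_le h (by omega)).symm
  have hunion : n + 1 < #(s ∪ t) :=
    hsc ▸ card_lt_card (Finset.ssubset_iff_subset_ne.mpr ⟨subset_union_left,
      fun h => hts (h ▸ subset_union_right)⟩)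
  have := card_le_card (union_subset hs ht)
  have := card_inter_add_card_union s t
  omega

lemma ncard_supersets_of_card_succ {f W : Finset V} (hfW : f ⊆ W) :
    {T : Finset V | T ⊆ W ∧ f ⊆ T ∧ #T = #f + 1}.ncard = #(W \ f) := by
  have himage : {T : Finset V | T ⊆ W ∧ f ⊆ T ∧ #T = #f + 1} =
      (fun x => insert x f) '' ↑(W \ f) := by
    ext T
    simp only [Set.mem_ofPred_eq, Set.mem_image, coe_sdiff, Set.mem_sdiff, mem_coe]
    constructor
    · rintro ⟨hTW, hfT, hT⟩
      obtain ⟨x, hxf, rfl⟩ := exists_eq_insert_iff.mpr ⟨hfT, hT.symm⟩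
      exact ⟨x, ⟨hTW (mem_insert_self x f), hxf⟩, rfl⟩
    · rintro ⟨x, ⟨hxW, hxf⟩, rfl⟩
      exact ⟨insert_subset hxW hfW, subset_insert x f, card_insert_of_notMem hxf⟩
  have hinj : Set.InjOn (fun x => insert x f) ↑(W \ f) := by
    intro x hx y _ hxy
    have hx' : x ∈ insert y f := by simp only at hxy; exact hxy ▸ mem_insert_self x f
    exact (mem_insert.mp hx').resolve_right (mem_sdiff.mp hx).2
  rw [himage, hinj.ncard_image, Set.ncard_coe_finset]

lemma IsCycle.dComplete_of_ncard_verts_le {Ω : Set (Finset V)} {d : ℕ} (hΩ : IsCycle Ω d)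
    (hfin : (verts Ω).Finite) (hsmall : (verts Ω).ncard ≤ d + 2) : DComplete Ω d := by
  obtain ⟨hcplx, -, ⟨D, hD⟩, -, heven⟩ := hΩ
  obtain ⟨W, hWV⟩ := hfin.exists_finset_coe
  have hW : #W ≤ d + 2 := by rwa [← hWV, Set.ncard_coe_finset] at hsmall
  have hfacesW : ∀ F ∈ Ω, F ⊆ W := fun F hF v hv => by
    rw [← mem_coe, hWV]; exact ⟨F, hF, hv⟩
  intro S hSV hS
  by_contra hSΩ
  have hSD : S ≠ D := fun h => hSΩ (h ▸ hD.1)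
  have hSW : S ⊆ W := by rw [← coe_subset, hWV]; exact hSV
  have hDW := hfacesW D hD.1
  have hSDcard : #(S ∩ D) = d := card_inter_eq_of_ne_s8 hSW hDW hW hS hD.2 hSD
  have hWcard : #W = d + 2 := by
    have := card_le_card (union_subset hSW hDW)
    have := card_inter_add_card_union S D
    have := hD.2
    omega
  obtain ⟨f, hfS, hfD, hf⟩ : ∃ f, f ⊆ S ∧ f ⊆ D ∧ #f = d :=
    ⟨S ∩ D, inter_subset_left, inter_subset_right, hSDcard⟩
  have hfW : f ⊆ W := hfS.trans hSW
  have hWf : #(W \ f) = 2 := by rw [card_sdiff_of_subset hfW]; omega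
  -- The `d`-faces through `f` are among the two `(d+1)`-subsets `S` and `D` of `W` through `f`,
  -- and `S` is not one of them: so there is exactly one.
  set B := {T : Finset V | T ⊆ W ∧ f ⊆ T ∧ #T = #f + 1}
  have hB : B.ncard = 2 := by rw [ncard_supersets_of_card_succ hfW, hWf]
  have hSB : S ∈ B := ⟨hSW, hfS, by rw [hS, hf]⟩
  have hsub : {F | F ∈ dfaces Ω d ∧ f ⊆ F} ⊆ B \ {S} := by
    rintro F ⟨hF, hfF⟩
    exact ⟨⟨hfacesW F hF.1, hfF, by rw [hF.2, hf]⟩, fun h => hSΩ (h ▸ hF.1)⟩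
  have hBfin : B.Finite := Set.finite_of_ncard_pos (by omega)
  have hle := Set.ncard_le_ncard hsub hBfin.sdiff
  rw [Set.ncard_sdiff_singleton_of_mem hSB, hB] at hle
  have hpos : 0 < {F | F ∈ dfaces Ω d ∧ f ⊆ F}.ncard :=
    (Set.ncard_pos (hBfin.sdiff.subset hsub)).mpr ⟨D, hD, hfD⟩
  have := heven f (hcplx D hD.1 f hfD) hf
  rw [show {F | F ∈ dfaces Ω d ∧ f ⊆ F}.ncard = 1 by omega] at this
  exact Nat.not_even_one this

lemma isCycle_simplexBoundary {F : Finset V} {d : ℕ} (hF : #F = d + 2) :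
    IsCycle (simplexBoundary F) d := by
  have hdF := dfaces_simplexBoundary hF
  have hextend : ∀ S ⊆ F, #S ≤ d + 1 → ∃ G ∈ dfaces (simplexBoundary F) d, S ⊆ G := by
    intro S hSF hS
    obtain ⟨G, hSG, hGF, hG⟩ := exists_subsuperset_card_eq hSF hS (by omega)
    exact ⟨G, hdF ▸ ⟨hGF, hG⟩, hSG⟩
  refine ⟨fun A hA B hB => lt_of_le_of_lt hB hA, fun S hS => hextend S hS.subset ?_,
    ?_, ?_, ?_⟩
  · have := card_lt_card hS
    omega
  · obtain ⟨G, hG, -⟩ := hextend ∅ (empty_subset F) (by simp)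
    exact ⟨G, hG⟩
  · intro G hG H hH
    obtain rfl | hne := eq_or_ne G H
    · exact Relation.ReflTransGen.refl
    obtain ⟨hGF, hGc⟩ : G ⊆ F ∧ #G = d + 1 := by rwa [hdF] at hG
    obtain ⟨hHF, hHc⟩ : H ⊆ F ∧ #H = d + 1 := by rwa [hdF] at hH
    exact .single ⟨hG, hH, card_inter_eq_of_ne_s8 hGF hHF hF.le hGc hHc hne⟩
  · intro f hf hfc
    have hset : {G | G ∈ dfaces (simplexBoundary F) d ∧ f ⊆ G} =
        {T | T ⊆ F ∧ f ⊆ T ∧ #T = #f + 1} := by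
      ext T
      simp only [hdF, Set.mem_ofPred_eq, hfc]
      tauto
    rw [hset, ncard_supersets_of_card_succ hf.subset, card_sdiff_of_subset hf.subset, hF, hfc]
    exact ⟨1, by omega⟩

section Chains

variable {R : Type*} [AddCommMonoid R]

lemma sum_single_erase_apply {F G : Finset V} (a : R) (hFG : #F = #G + 1) :
    (∑ v ∈ F, Finsupp.single (F.erase v) a) G = if G ⊆ F then a else 0 := by
  rw [Finsupp.finsetSum_apply]
  simp only [Finsupp.single_apply]
  split_ifs with hGF
  · obtain ⟨x, hxG, rfl⟩ := exists_eq_insert_iff.mpr ⟨hGF, hFG.symm⟩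
    have herase : ∀ v ∈ insert x G, (insert x G).erase v = G ↔ v = x := by
      refine fun v hv => ⟨fun h => ?_, by rintro rfl; exact erase_insert hxG⟩
      refine (mem_insert.mp hv).resolve_right fun hvG => ?_
      exact notMem_erase v _ (h ▸ hvG)
    rw [sum_congr rfl fun v hv => if_congr (herase v hv) rfl rfl, sum_ite_eq' _ _ _,
      if_pos (mem_insert_self x G)]
  · exact sum_eq_zero fun v _ => if_neg fun (h : F.erase v = G) => hGF (h ▸ erase_subset v F)

lemma ubd_apply_of_card_ne {b : Finset V →₀ R} {m : ℕ} (hb : ∀ F ∈ b.support, #F = m + 1)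
    {G : Finset V} (hG : #G ≠ m) : ubd b G = 0 := by
  rw [ubd, Finsupp.sum, Finsupp.finsetSum_apply]
  refine sum_eq_zero fun F hF => ?_
  rw [Finsupp.finsetSum_apply]
  refine sum_eq_zero fun v hv => Finsupp.single_eq_of_ne fun h => hG ?_
  rw [h, card_erase_of_mem hv, hb F hF, Nat.add_sub_cancel]

end Chains

noncomputable def chainOf (s : Finset (Finset V)) : Finset V →₀ ZMod 2 :=
  Finsupp.indicator s fun _ _ => 1

lemma chainOf_apply (s : Finset (Finset V)) (G : Finset V) :
    chainOf s G = if G ∈ s then 1 else 0 := by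
  rw [chainOf, Finsupp.indicator_apply, dite_eq_ite]

lemma support_chainOf (s : Finset (Finset V)) : (chainOf s).support = s := by
  ext G
  rw [Finsupp.mem_support_iff, chainOf_apply]
  split_ifs with h <;> simp [h]

lemma chainOf_support (b : Finset V →₀ ZMod 2) : chainOf b.support = b := by
  ext G
  rw [chainOf_apply]
  split_ifs with h
  · have hunit : ∀ x : ZMod 2, x ≠ 0 → x = 1 := by decide
    exact (hunit _ (Finsupp.mem_support_iff.mp h)).symm
  · exact (Finsupp.notMem_support_iff.mp h).symm

lemma ubd_chainOf_apply {s : Finset (Finset V)} {m : ℕ} (hs : ∀ F ∈ s, #F = m + 1)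
    {G : Finset V} (hG : #G = m) : ubd (chainOf s) G = #{F ∈ s | G ⊆ F} := by
  rw [ubd, Finsupp.sum, Finsupp.finsetSum_apply, support_chainOf, card_filter, Nat.cast_sum]
  refine sum_congr rfl fun F hF => ?_
  rw [sum_single_erase_apply _ (by rw [hs F hF, hG]), chainOf_apply, if_pos hF]
  split_ifs <;> simp

lemma ubd_chainOf_eq_zero {Ω : Set (Finset V)} {d : ℕ} {s : Finset (Finset V)}
    (hs : ↑s = dfaces Ω d) (hΩ : IsCycle Ω d) : ubd (chainOf s) = 0 := by
  obtain ⟨hcplx, -, -, -, heven⟩ := hΩ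
  have hsd : ∀ F ∈ s, F ∈ dfaces Ω d := fun F hF => hs ▸ mem_coe.mpr hF
  ext G
  rw [Finsupp.coe_zero, Pi.zero_apply]
  by_cases hG : #G = d
  · rw [ubd_chainOf_apply (fun F hF => (hsd F hF).2) hG, ZMod.natCast_eq_zero_iff_even]
    by_cases hGΩ : G ∈ Ω
    · convert heven G hGΩ hG using 1
      rw [← Set.ncard_coe_finset, coe_filter, ← hs]
      rfl
    · rw [filter_eq_empty_iff.mpr fun F hF hGF => hGΩ (hcplx F (hsd F hF).1 G hGF)]
      exact Even.zero
  · exact ubd_apply_of_card_ne (fun F hF => (hsd F (support_chainOf s ▸ hF)).2) hG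

lemma odd_card_superset_iff_of_ubd_eq_chainOf {b : Finset V →₀ ZMod 2} {s : Finset (Finset V)}
    {m : ℕ} (hb : ∀ F ∈ b.support, #F = m + 1) (h : ubd b = chainOf s) {G : Finset V}
    (hG : #G = m) : Odd #{F ∈ b.support | G ⊆ F} ↔ G ∈ s := by
  have hG' := DFunLike.congr_fun h G
  rw [← chainOf_support b, ubd_chainOf_apply hb hG, chainOf_apply] at hG'
  rw [← ZMod.natCast_eq_one_iff_odd, hG']
  split_ifs <;> simp_all

lemma ncard_setOf_equivFin_symm {α : Type*} (t : Finset α) (p : α → Prop) [DecidablePred p] :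
    {i | p (t.equivFin.symm i)}.ncard = #{x ∈ t | p x} := by
  have hinj : Function.Injective fun i => (t.equivFin.symm i : α) :=
    Subtype.val_injective.comp t.equivFin.symm.injective
  rw [← Set.ncard_image_of_injective _ hinj, ← Set.ncard_coe_finset {x ∈ t | p x},
    coe_filter]
  congr 1
  ext x
  constructor
  · rintro ⟨i, hi, rfl⟩
    exact ⟨(t.equivFin.symm i).2, hi⟩
  · rintro ⟨hx, hpx⟩
    exact ⟨t.equivFin ⟨x, hx⟩, by simpa using hpx, by simp⟩

/-- The chord set consists of the `d`-faces of the boundaries `∂F`, `F ∈ t`, that are not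
faces of `Ω`. -/
lemma exists_chordSet_of_odd_card_superset_iff {Γ Ω : Set (Finset V)} {d : ℕ}
    (hΓ : IsComplex Γ) (hΩ : IsCycle Ω d) (hbig : d + 2 < (verts Ω).ncard)
    (t : Finset (Finset V)) (ht : ∀ F ∈ t, F ∈ Γ ∧ ↑F ⊆ verts Ω ∧ #F = d + 2)
    (hodd : ∀ G : Finset V, #G = d + 1 → (Odd #{F ∈ t | G ⊆ F} ↔ G ∈ dfaces Ω d)) :
    ∃ C, ChordSet (skel Γ d) Ω d C := by
  set σ : Fin #t → Finset V := fun i => t.equivFin.symm i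
  have hσ : ∀ i, σ i ∈ t := fun i => (t.equivFin.symm i).2
  have hdfi : ∀ i, dfaces (simplexBoundary (σ i)) d = {G | G ⊆ σ i ∧ #G = d + 1} :=
    fun i => dfaces_simplexBoundary (ht _ (hσ i)).2.2
  have hcount : ∀ G : Finset V, #G = d + 1 →
      {i | G ∈ dfaces (simplexBoundary (σ i)) d}.ncard = #{F ∈ t | G ⊆ F} := by
    intro G hG
    simp only [hdfi, Set.mem_ofPred_eq, hG, and_true]
    exact ncard_setOf_equivFin_symm t (G ⊆ ·)
  have hcover : ∀ D ∈ dfaces Ω d, ∃ i, D ∈ dfaces (simplexBoundary (σ i)) d := by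
    intro D hD
    have hpos := ((hodd D hD.2).mpr hD).pos
    rw [← hcount D hD.2] at hpos
    exact Set.nonempty_of_ncard_ne_zero hpos.ne'
  have htwo : 2 ≤ #t := by
    refine two_le_card_of_forall_dfaces_subset hΩ.2.1 hΩ.2.2.1 hbig (fun F hF => (ht F hF).2.2)
      fun D hD => ?_
    obtain ⟨i, hi⟩ := hcover D hD
    exact ⟨σ i, hσ i, ((hdfi i).subset hi).1⟩
  set C := (⋃ i, dfaces (simplexBoundary (σ i)) d) \ dfaces Ω d
  have hC : ∀ F ∈ C, #F = d + 1 ∧ F ∉ dfaces Ω d ∧ ∃ i, F ⊆ σ i := by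
    rintro F ⟨hF, hFΩ⟩
    obtain ⟨i, hi⟩ := Set.mem_iUnion.mp hF
    rw [hdfi] at hi
    exact ⟨hi.2, hFΩ, i, hi.1⟩
  refine ⟨C, fun F hF => ?_, fun F hF hFΩ => ?_, fun F hF => ?_, #t,
    fun i => simplexBoundary (σ i), htwo, fun i => isCycle_simplexBoundary (ht _ (hσ i)).2.2,
    ?_, fun F hF => ?_, fun F hF => ?_, fun i => ?_⟩
  · obtain ⟨hFc, -, i, hFi⟩ := hC F hF
    rw [dfaces_skel]
    exact ⟨hΓ _ (ht _ (hσ i)).1 F hFi, hFc⟩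
  · obtain ⟨hFc, hFnot, -⟩ := hC F hF
    exact hFnot ⟨hFΩ, hFc⟩
  · obtain ⟨-, -, i, hFi⟩ := hC F hF
    exact (coe_subset.mpr hFi).trans (ht _ (hσ i)).2.1
  · rw [Set.union_sdiff_self,
      Set.union_eq_right.mpr fun D hD => Set.mem_iUnion.mpr (hcover D hD)]
  · obtain ⟨hFc, hFnot, -⟩ := hC F hF
    rw [hcount F hFc, ← Nat.not_odd_iff_even, hodd F hFc]
    exact hFnot
  · rw [hcount F hF.2, hodd F hF.2]
    exact hF
  · rw [verts_simplexBoundary (by rw [(ht _ (hσ i)).2.2]; omega), Set.ncard_coe_finset,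
      (ht _ (hσ i)).2.2]
    exact hbig

theorem homology_vanishing_dChorded_general {V : Type*} [DecidableEq V] [Fintype V]
    (Γ : Set (Finset V)) (d : ℕ) (hcomplex : IsComplex Γ)
    (hhom : ∀ W : Set V, RedHomZeroU (induced Γ W) (ZMod 2) d) :
    DChorded (skel Γ d) d := by
  rintro Ω ⟨hΩΓ, hΩ⟩ - hncomplete
  obtain ⟨s, hs⟩ := (Set.toFinite (dfaces Ω d)).exists_finset_coe
  have hchain : ChainOn (induced Γ (verts Ω)) d (chainOf s) := by
    intro F hF
    rw [support_chainOf, ← mem_coe, hs] at hF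
    have hFΓ : F ∈ dfaces Γ d := dfaces_skel Γ d ▸ ⟨hΩΓ hF.1, hF.2⟩
    exact ⟨⟨hFΓ.1, fun v hv => ⟨F, hF.1, hv⟩⟩, hF.2⟩
  obtain ⟨b, hb, hbd⟩ := hhom (verts Ω) (chainOf s) hchain (ubd_chainOf_eq_zero hs hΩ)
  have hbig : d + 2 < (verts Ω).ncard := by
    by_contra! h
    exact hncomplete (hΩ.dComplete_of_ncard_verts_le (Set.toFinite _) h)
  refine exists_chordSet_of_odd_card_superset_iff hcomplex hΩ hbig b.support
    (fun F hF => ⟨(hb F hF).1.1, (hb F hF).1.2, (hb F hF).2⟩) fun G hG => ?_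
  rw [odd_card_superset_iff_of_ubd_eq_chainOf (fun F hF => (hb F hF).2) hbd hG, ← mem_coe, hs]

/-- Theorem 6.1.2: if `Γ = Δ_d(Γ^{[d]})` and every induced subcomplex of
`Γ` has vanishing reduced homology `H̃_d(Γ_W; ℤ/2ℤ) = 0` (as holds when the
Stanley–Reisner ideal of `Γ` has a `(d+1)`-linear resolution over a field of
characteristic 2), then `Γ^{[d]}` is `d`-chorded. -/
theorem homology_vanishing_dChorded {V : Type*} [DecidableEq V] [Fintype V]
    (Γ : Set (Finset V)) (d : ℕ) (hcomplex : IsComplex Γ)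
    (hcl : Γ = closure (verts Γ) (skel Γ d) d)
    (hhom : ∀ W : Set V, RedHomZeroU (induced Γ W) (ZMod 2) d) :
    DChorded (skel Γ d) d :=
  homology_vanishing_dChorded_general Γ d hcomplex hhom

end ChordedPaper
end
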